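/- arXiv:0903.1577 — 7 statements merged into one kernel-verified Lean document; each statement's English description precedes it below -/
import Mathlib

section
/- Let (X,d) be a complete metric space and T,S : X → X mappings such that T is continuous, injective, and subsequentially convergent. If there exists λ ∈ [0, 1/2) such that d(T(S x), T(S y)) ≤ λ·(d(T x, T(S x)) + d(T y, T(S y))) for all x, y ∈ X, then S has a unique fixed point. -/
/-!
Along the orbit `xₙ = Sⁿ x₀`, the Kannan inequality applied to `xₙ, xₙ₊₁` gives
`d(Txₙ₊₁, Txₙ₊₂) ≤ λ/(1-λ) · d(Txₙ, Txₙ₊₁)` with `λ/(1-λ) < 1`, so `(Txₙ)` is Cauchy and converges.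
Subsequential convergence of `T` yields a cluster point `z` of `(xₙ)`, and continuity of `T`
identifies the limit of `(Txₙ)` as `Tz`. Passing to the limit in `d(TSz, Txₙ₊₁) ≤ λ (d(Tz, TSz) + d(Txₙ, Txₙ₊₁))` gives
`d(TSz, Tz) ≤ λ d(Tz, TSz)`, hence `TSz = Tz` and `Sz = z` by injectivity. Two fixed points `u, v`
satisfy `d(Tu, Tv) ≤ 0` directly.
-/

open Filter Topology

def KannanWith {X : Type*} [PseudoMetricSpace X] (T : X → X) (lam : ℝ) (S : X → X) : Prop :=
  ∀ x y : X, dist (T (S x)) (T (S y)) ≤ lam * (dist (T x) (T (S x)) + dist (T y) (T (S y)))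

namespace KannanWith

section PseudoMetric

variable {X : Type*} [PseudoMetricSpace X] {T S : X → X} {lam : ℝ}

theorem dist_apply_succ_le (hK : KannanWith T lam S) (hlam : lam < 1) (x : X) :
    dist (T (S x)) (T (S (S x))) ≤ lam / (1 - lam) * dist (T x) (T (S x)) := by
  have hstep := hK x (S x)
  rw [div_mul_eq_mul_div, le_div_iff₀ (by linarith)]
  linarith

theorem dist_apply_iterate_succ_le (hK : KannanWith T lam S) (hlam0 : 0 ≤ lam) (hlam : lam < 1)
    (x : X) (n : ℕ) :
    dist (T (S^[n] x)) (T (S^[n + 1] x)) ≤ dist (T x) (T (S x)) * (lam / (1 - lam)) ^ n := by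
  induction n with
  | zero => simp
  | succ n ih =>
    have hr : 0 ≤ lam / (1 - lam) := div_nonneg hlam0 (by linarith)
    simp only [Function.iterate_succ_apply'] at ih ⊢
    calc dist (T (S (S^[n] x))) (T (S (S (S^[n] x))))
        ≤ lam / (1 - lam) * dist (T (S^[n] x)) (T (S (S^[n] x))) :=
          hK.dist_apply_succ_le hlam _
      _ ≤ lam / (1 - lam) * (dist (T x) (T (S x)) * (lam / (1 - lam)) ^ n) :=
          mul_le_mul_of_nonneg_left ih hr
      _ = dist (T x) (T (S x)) * (lam / (1 - lam)) ^ (n + 1) := by ring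

theorem cauchySeq_apply_iterate (hK : KannanWith T lam S) (hlam0 : 0 ≤ lam) (hlam : lam < 1 / 2)
    (x : X) : CauchySeq fun n => T (S^[n] x) :=
  cauchySeq_of_le_geometric _ _ (by rw [div_lt_one (by linarith)]; linarith)
    (hK.dist_apply_iterate_succ_le hlam0 (by linarith) x)

end PseudoMetric

section Metric

variable {X : Type*} [MetricSpace X] {T S : X → X} {lam : ℝ}

theorem apply_map_eq_of_tendsto (hK : KannanWith T lam S) (hlam : lam < 1) {x z : X}
    (hz : Tendsto (fun n => T (S^[n] x)) atTop (𝓝 (T z))) : T (S z) = T z := by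
  have hz' : Tendsto (fun n => T (S (S^[n] x))) atTop (𝓝 (T z)) := by
    simpa only [Function.comp_def, Function.iterate_succ_apply'] using hz.comp (tendsto_add_atTop_nat 1)
  have hgap : Tendsto (fun n => dist (T (S^[n] x)) (T (S (S^[n] x)))) atTop (𝓝 0) := by
    simpa only [dist_self] using hz.dist hz'
  have hle : dist (T (S z)) (T z) ≤ lam * (dist (T z) (T (S z)) + 0) :=
    le_of_tendsto_of_tendsto' (tendsto_const_nhds.dist hz')
      ((tendsto_const_nhds.add hgap).const_mul lam) fun n => hK z _
  rw [add_zero, dist_comm (T z)] at hle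
  exact dist_le_zero.mp (by nlinarith [dist_nonneg (x := T (S z)) (y := T z)])

theorem apply_eq_of_isFixedPt (hK : KannanWith T lam S) {u v : X}
    (hu : Function.IsFixedPt S u) (hv : Function.IsFixedPt S v) : T u = T v := by
  have huv := hK u v
  rw [hu, hv, dist_self, dist_self, add_zero, mul_zero] at huv
  exact dist_le_zero.mp huv

end Metric

end KannanWith

theorem extended_kannan_fixed_point
    {X : Type*} [MetricSpace X] [CompleteSpace X] [Nonempty X]
    (T S : X → X)
    (hTc : Continuous T) (hTi : Function.Injective T)
    (hTsub : ∀ y : ℕ → X, (∃ L : X, Tendsto (fun n => T (y n)) atTop (𝓝 L)) →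
      ∃ (z : X) (φ : ℕ → ℕ), StrictMono φ ∧ Tendsto (fun k => y (φ k)) atTop (𝓝 z))
    (lam : ℝ) (hlam0 : 0 ≤ lam) (hlam : lam < 1/2)
    (h : ∀ x y : X, dist (T (S x)) (T (S y)) ≤
      lam * (dist (T x) (T (S x)) + dist (T y) (T (S y)))) :
    ∃! u : X, S u = u := by
  have hK : KannanWith T lam S := h
  obtain ⟨x₀⟩ := ‹Nonempty X›
  obtain ⟨L, hL⟩ := cauchySeq_tendsto_of_complete (hK.cauchySeq_apply_iterate hlam0 hlam x₀)
  obtain ⟨z, φ, hφ, hz⟩ := hTsub _ ⟨L, hL⟩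
  obtain rfl : T z = L := tendsto_nhds_unique ((hTc.tendsto z).comp hz) (hL.comp hφ.tendsto_atTop)
  have hSz : S z = z := hTi (hK.apply_map_eq_of_tendsto (by linarith) hL)
  exact ⟨z, hSz, fun u hu => hTi (hK.apply_eq_of_isFixedPt hu hSz)⟩
end

section
/- Let (X,d) be a complete metric space and T,S : X → X mappings such that T is continuous, injective, and sequentially convergent. If there exists λ ∈ [0, 1/2) such that d(T(S x), T(S y)) ≤ λ·(d(T x, T(S x)) + d(T y, T(S y))) for all x, y ∈ X, then for every x₀ ∈ X the sequence of iterates {Sⁿ x₀} converges to the unique fixed point of S. -/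
/-!
Put `bₙ = T (Sⁿ x₀)`. The contraction condition applied to `Sⁿ x₀, Sⁿ⁺¹ x₀` gives
`d(bₙ₊₁, bₙ₊₂) ≤ λ/(1-λ) · d(bₙ, bₙ₊₁)` with `λ/(1-λ) < 1`, so `(bₙ)` is Cauchy and converges.
Sequential convergence of `T` makes `Sⁿ x₀` converge to some `z`, and continuity of `T` gives
`bₙ → T z`. Applying the condition to `Sⁿ x₀, z` and letting `n → ∞` yields
`d(T z, T (S z)) ≤ λ · d(T z, T (S z))`, so `T (S z) = T z` and `S z = z` by injectivity.
The same condition at two fixed points forces their `T`-images to coincide, so the fixed point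
is unique.
-/

open Filter Topology Function

/-- Kannan's contraction condition for `S`, measured through `T`. -/
def KannanCondition {X : Type*} [MetricSpace X] (T S : X → X) (lam : ℝ) : Prop :=
  ∀ x y : X, dist (T (S x)) (T (S y)) ≤ lam * (dist (T x) (T (S x)) + dist (T y) (T (S y)))

namespace KannanCondition

variable {X : Type*} [MetricSpace X] {T S : X → X} {lam : ℝ}

theorem eq_of_isFixedPt (h : KannanCondition T S lam) (hTi : Injective T) {v w : X}
    (hv : IsFixedPt S v) (hw : IsFixedPt S w) : v = w := by
  have hvw := h v w
  rw [hv, hw, dist_self, dist_self, add_zero, mul_zero] at hvw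
  exact hTi (dist_le_zero.mp hvw)

theorem dist_iterate_succ_le (h : KannanCondition T S lam) (hlam : lam < 1) (x : X) (n : ℕ) :
    dist (T (S^[n + 1] x)) (T (S^[n + 2] x)) ≤
      lam / (1 - lam) * dist (T (S^[n] x)) (T (S^[n + 1] x)) := by
  have hn := h (S^[n] x) (S^[n + 1] x)
  rw [← iterate_succ_apply' S n, ← iterate_succ_apply' S (n + 1)] at hn
  rw [div_mul_eq_mul_div, le_div_iff₀ (by linarith)]
  linarith

theorem cauchySeq_iterate (h : KannanCondition T S lam) (hlam0 : 0 ≤ lam) (hlam : lam < 1 / 2)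
    (x : X) : CauchySeq fun n => T (S^[n] x) := by
  have hr0 : 0 ≤ lam / (1 - lam) := div_nonneg hlam0 (by linarith)
  have hr1 : lam / (1 - lam) < 1 := (div_lt_one (by linarith)).mpr (by linarith)
  refine cauchySeq_of_le_geometric _ (dist (T x) (T (S x))) hr1 fun n => ?_
  rw [mul_comm]
  exact le_geom (u := fun n => dist (T (S^[n] x)) (T (S^[n + 1] x))) hr0 n
    fun k _ => h.dist_iterate_succ_le (by linarith) x k

theorem isFixedPt_of_tendsto (h : KannanCondition T S lam) (hlam : lam < 1) (hTi : Injective T)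
    {x z : X} (hz : Tendsto (fun n => T (S^[n] x)) atTop (𝓝 (T z))) : IsFixedPt S z := by
  have hz' : Tendsto (fun n => T (S^[n + 1] x)) atTop (𝓝 (T z)) :=
    hz.comp (tendsto_add_atTop_nat 1)
  have hstep : Tendsto (fun n => dist (T (S^[n] x)) (T (S^[n + 1] x))) atTop (𝓝 0) := by
    simpa using hz.dist hz'
  have hle : dist (T z) (T (S z)) ≤ lam * (0 + dist (T z) (T (S z))) :=
    le_of_tendsto_of_tendsto' (hz'.dist tendsto_const_nhds)
      (tendsto_const_nhds.mul (hstep.add tendsto_const_nhds)) fun n => by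
        simpa only [iterate_succ_apply'] using h (S^[n] x) z
  have hd0 : dist (T z) (T (S z)) = 0 := by
    nlinarith [dist_nonneg (x := T z) (y := T (S z))]
  exact (hTi (dist_eq_zero.mp hd0)).symm

end KannanCondition

theorem extended_kannan_iterates_converge
    {X : Type*} [MetricSpace X] [CompleteSpace X] [Nonempty X]
    (T S : X → X)
    (hTc : Continuous T) (hTi : Function.Injective T)
    (hTseq : ∀ y : ℕ → X, (∃ L : X, Tendsto (fun n => T (y n)) atTop (𝓝 L)) →
      ∃ z : X, Tendsto y atTop (𝓝 z))
    (lam : ℝ) (hlam0 : 0 ≤ lam) (hlam : lam < 1/2)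
    (h : ∀ x y : X, dist (T (S x)) (T (S y)) ≤
      lam * (dist (T x) (T (S x)) + dist (T y) (T (S y)))) :
    ∃ u : X, (∀ v : X, S v = v ↔ v = u) ∧
      ∀ x₀ : X, Tendsto (fun n => S^[n] x₀) atTop (𝓝 u) := by
  have hK : KannanCondition T S lam := h
  have orbit_tendsto : ∀ x₀ : X, ∃ z, IsFixedPt S z ∧ Tendsto (fun n => S^[n] x₀) atTop (𝓝 z) := by
    intro x₀
    obtain ⟨L, hL⟩ := cauchySeq_tendsto_of_complete (hK.cauchySeq_iterate hlam0 hlam x₀)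
    obtain ⟨z, hz⟩ := hTseq _ ⟨L, hL⟩
    exact ⟨z, hK.isFixedPt_of_tendsto (by linarith) hTi ((hTc.tendsto z).comp hz), hz⟩
  obtain ⟨u, hu, -⟩ := orbit_tendsto (Classical.arbitrary X)
  refine ⟨u, fun v => ⟨fun hv => hK.eq_of_isFixedPt hTi hv hu, fun hv => hv ▸ hu⟩, fun x₀ => ?_⟩
  obtain ⟨z, hz, hconv⟩ := orbit_tendsto x₀
  rwa [hK.eq_of_isFixedPt hTi hz hu] at hconv
end

section
/- Let (X,d) be a metric space, S, T : X → X, λ ∈ [0, 1/2), and suppose d(T(S x), T(S y)) ≤ λ·(d(T x, T(S x)) + d(T y, T(S y))) for all x, y ∈ X. Then for every x₀ ∈ X, the sequence {T(Sⁿ x₀)} is a Cauchy sequence in X. -/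
/-! Put `xₙ = Sⁿ x₀`. Applying the hypothesis to `xₙ, xₙ₊₁` bounds `aₙ₊₁ = d(T xₙ₊₁, T xₙ₊₂)` by
`λ (aₙ + aₙ₊₁)`, that is `aₙ₊₁ ≤ r aₙ` with `r = λ / (1 - λ) < 1` because `λ < 1/2`. The
consecutive distances of `T xₙ` thus decay geometrically, so the sequence is Cauchy. -/

theorem le_div_one_sub_mul_of_le_mul_add {K : Type*} [Field K] [LinearOrder K]
    [IsStrictOrderedRing K] {lam a b : K} (hlam : lam < 1)
    (h : b ≤ lam * (a + b)) : b ≤ lam / (1 - lam) * a := by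
  rw [div_mul_eq_mul_div, le_div_iff₀ (sub_pos.mpr hlam)]
  linarith

theorem le_mul_pow_of_le_mul_succ {R : Type*} [CommSemiring R] [PartialOrder R]
    [IsOrderedRing R] {r : R} {a : ℕ → R} (hr : 0 ≤ r) (hstep : ∀ n, a (n + 1) ≤ r * a n)
    (n : ℕ) : a n ≤ a 0 * r ^ n := by
  induction n with
  | zero => simp
  | succ k ih =>
    calc a (k + 1) ≤ r * a k := hstep k
      _ ≤ r * (a 0 * r ^ k) := mul_le_mul_of_nonneg_left ih hr
      _ = a 0 * r ^ (k + 1) := by ring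

theorem cauchySeq_of_dist_succ_le_mul {α : Type*} [PseudoMetricSpace α] {f : ℕ → α} {r : ℝ}
    (hr0 : 0 ≤ r) (hr1 : r < 1)
    (hstep : ∀ n, dist (f (n + 1)) (f (n + 2)) ≤ r * dist (f n) (f (n + 1))) :
    CauchySeq f :=
  cauchySeq_of_le_geometric r _ hr1 (le_mul_pow_of_le_mul_succ hr0 hstep)

theorem cauchySeq_of_dist_succ_le_mul_add {α : Type*} [PseudoMetricSpace α] {f : ℕ → α}
    {lam : ℝ} (hlam0 : 0 ≤ lam) (hlam : lam < 1 / 2)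
    (hstep : ∀ n, dist (f (n + 1)) (f (n + 2)) ≤
      lam * (dist (f n) (f (n + 1)) + dist (f (n + 1)) (f (n + 2)))) :
    CauchySeq f := by
  have hlam1 : lam < 1 := by linarith
  refine cauchySeq_of_dist_succ_le_mul (r := lam / (1 - lam)) ?_ ?_
    (fun n ↦ le_div_one_sub_mul_of_le_mul_add hlam1 (hstep n))
  · exact div_nonneg hlam0 (sub_nonneg.mpr hlam1.le)
  · rw [div_lt_one (sub_pos.mpr hlam1)]
    linarith

theorem kannan_iterates_cauchy
    {X : Type*} [MetricSpace X]
    (S T : X → X)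
    (lam : ℝ) (hlam0 : 0 ≤ lam) (hlam : lam < 1/2)
    (h : ∀ x y : X, dist (T (S x)) (T (S y)) ≤
      lam * (dist (T x) (T (S x)) + dist (T y) (T (S y))))
    (x₀ : X) :
    CauchySeq (fun n => T (S^[n] x₀)) := by
  refine cauchySeq_of_dist_succ_le_mul_add hlam0 hlam fun n ↦ ?_
  simpa only [← Function.iterate_succ_apply' S] using h (S^[n] x₀) (S^[n + 1] x₀)
end

section
/- Let X = {0} ∪ {1/n : n ∈ ℕ, n ≥ 4} with the Euclidean metric, and define S : X → X by S(0) = 0 and S(1/n) = 1/(n+1) for n ≥ 4. Then there is no λ ∈ [0, 1/2) such that |S x − S y| ≤ λ·(|x − S x| + |y − S y|) for all x, y ∈ X. -/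
theorem kannan_condition_fails_example
    (S : ℝ → ℝ) (hS0 : S 0 = 0)
    (hSn : ∀ n : ℕ, 4 ≤ n → S (1 / n) = 1 / (n + 1 : ℕ)) :
    ¬ ∃ lam : ℝ, 0 ≤ lam ∧ lam < 1/2 ∧
      ∀ x ∈ ({0} ∪ {x : ℝ | ∃ n : ℕ, 4 ≤ n ∧ x = 1 / n} : Set ℝ),
      ∀ y ∈ ({0} ∪ {x : ℝ | ∃ n : ℕ, 4 ≤ n ∧ x = 1 / n} : Set ℝ),
        |S x - S y| ≤ lam * (|x - S x| + |y - S y|) := by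
  rintro ⟨lam, h0, h2, h⟩
  have hx : (1 / (4:ℕ) : ℝ) ∈ ({0} ∪ {x : ℝ | ∃ n : ℕ, 4 ≤ n ∧ x = 1 / n} : Set ℝ) :=
    Or.inr ⟨4, le_refl 4, rfl⟩
  have hy : (0:ℝ) ∈ ({0} ∪ {x : ℝ | ∃ n : ℕ, 4 ≤ n ∧ x = 1 / n} : Set ℝ) := Or.inl rfl
  have := h _ hx _ hy
  rw [hS0, hSn 4 (le_refl 4)] at this
  norm_num [abs_of_pos, abs_of_nonneg] at this
  linarith
end

section
/- Let X = {0} ∪ {1/n : n ∈ ℕ, n ≥ 4} with the Euclidean metric. Define S : X → X by S(0)=0, S(1/n)=1/(n+1), and T : X → X by T(0)=0, T(1/n)=1/nⁿ for n ≥ 4. Then for all x, y ∈ X, |T(S x) − T(S y)| ≤ (1/3)·(|T x − T(S x)| + |T y − T(S y)|). -/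
/-! Along the orbit of `S`, `T` drops by a factor of at least `4`, since
`4 nⁿ ≤ (n + 1)ⁿ⁺¹` for `n ≥ 3`. So each `T (S x)` is nonnegative and at most a third of the
displacement `T x - T (S x)`, and `|T (S x) - T (S y)| ≤ max (T (S x)) (T (S y))`. -/

theorem abs_sub_le_inv_mul_add_of_succ_mul_le {k a b A B : ℝ} (hk : 0 < k) (ha : 0 ≤ a)
    (hb : 0 ≤ b) (hA : (k + 1) * a ≤ A) (hB : (k + 1) * b ≤ B) :
    |a - b| ≤ k⁻¹ * (|A - a| + |B - b|) := by
  rw [abs_of_nonneg (by nlinarith : 0 ≤ A - a), abs_of_nonneg (by nlinarith : 0 ≤ B - b),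
    le_inv_mul_iff₀ hk]
  rcases abs_cases (a - b) with ⟨h, -⟩ | ⟨h, -⟩ <;> rw [h] <;> nlinarith

theorem four_mul_pow_self_le_succ_pow_succ {n : ℕ} (hn : 3 ≤ n) :
    4 * n ^ n ≤ (n + 1) ^ (n + 1) :=
  calc 4 * n ^ n ≤ (n + 1) * (n + 1) ^ n :=
        Nat.mul_le_mul (by omega) (Nat.pow_le_pow_left n.le_succ n)
    _ = (n + 1) ^ (n + 1) := (pow_succ' _ _).symm

theorem extended_kannan_condition_holds_example
    (S T : ℝ → ℝ) (hS0 : S 0 = 0) (hT0 : T 0 = 0)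
    (hSn : ∀ n : ℕ, 4 ≤ n → S (1 / n) = 1 / (n + 1 : ℕ))
    (hTn : ∀ n : ℕ, 4 ≤ n → T (1 / n) = 1 / (n : ℝ) ^ n) :
    ∀ x ∈ ({0} ∪ {x : ℝ | ∃ n : ℕ, 4 ≤ n ∧ x = 1 / n} : Set ℝ),
    ∀ y ∈ ({0} ∪ {x : ℝ | ∃ n : ℕ, 4 ≤ n ∧ x = 1 / n} : Set ℝ),
      |T (S x) - T (S y)| ≤ (1/3) * (|T x - T (S x)| + |T y - T (S y)|) := by
  have orbit_drop : ∀ p ∈ ({0} ∪ {x : ℝ | ∃ n : ℕ, 4 ≤ n ∧ x = 1 / n} : Set ℝ),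
      0 ≤ T (S p) ∧ (3 + 1) * T (S p) ≤ T p := by
    rintro p (rfl | ⟨n, hn, rfl⟩)
    · simp [hS0, hT0]
    · rw [hSn n hn, hTn (n + 1) (by omega), hTn n hn]
      have hdrop : (4 : ℝ) * n ^ n ≤ (n + 1) ^ (n + 1) := by
        exact_mod_cast four_mul_pow_self_le_succ_pow_succ (by omega : 3 ≤ n)
      refine ⟨by positivity, ?_⟩
      rw [mul_one_div, div_le_div_iff₀ (by positivity) (by positivity)]
      push_cast
      linarith
  intro x hx y hy
  obtain ⟨hx₀, hx₁⟩ := orbit_drop x hx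
  obtain ⟨hy₀, hy₁⟩ := orbit_drop y hy
  simpa using abs_sub_le_inv_mul_add_of_succ_mul_le three_pos hx₀ hy₀ hx₁ hy₁
end

section
/- Let X be a nonempty set with d : X × X → ℝ satisfying: d(x,y) ≥ 0 with d(x,y)=0 iff x=y; d(x,y)=d(y,x); and the rectangular inequality d(x,y) ≤ d(x,w)+d(w,z)+d(z,y) for all x,y and distinct w,z ∈ X \ {x,y}. Suppose (X,d) is complete (every d-Cauchy sequence converges) and T,S : X → X with T continuous, injective, and subsequentially convergent, and λ ∈ [0,1/2) with d(T(S x), T(S y)) ≤ λ·(d(T x, T(S x)) + d(T y, T(S y))) for all x,y ∈ X. Then S has a unique fixed point. -/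
/-!
Along an orbit `xₙ = Sⁿ x₀` the displacements `aₙ = d (T xₙ) (T xₙ₊₁)` satisfy `aₙ₊₁ ≤ c aₙ` with
`c = λ / (1 - λ) < 1`, and the contraction also gives `d (T xₙ₊₁) (T xₙ₊₃) ≤ cⁿ a₀`. Without a
triangle inequality one cannot telescope; instead the rectangular inequality through the next two
orbit points gives `d (T xₙ₊₁) (T xₙ₊ₖ₊₂) ≤ cⁿ a₀ / (1 - c)` by strong induction on `k`, because
`cⁿ + cⁿ⁺¹ + cⁿ⁺² / (1 - c) = cⁿ / (1 - c)`. The rectangular inequality only applies to distinct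
points, and the `T xₙ` are pairwise distinct unless the orbit reaches a fixed point, since
otherwise `aₙ` is strictly decreasing. Completeness and subsequential convergence give a limit
`z` of a subsequence of the orbit, and a rectangular inequality through two late orbit points
forces `d (T z) (T (S z)) = 0`.
-/

open Filter Topology Function

section Rectangular

variable {X : Type*} (d : X → X → ℝ)

def IsRectangular : Prop :=
  ∀ x y w z : X, w ≠ z → w ≠ x → w ≠ y → z ≠ x → z ≠ y → d x y ≤ d x w + d w z + d z y

def IsDCauchy (u : ℕ → X) : Prop :=
  ∀ ε : ℝ, 0 < ε → ∃ N, ∀ m ≥ N, ∀ n ≥ N, d (u m) (u n) < ε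

variable {d}

theorem dist_le_of_isRectangular_of_geometric (hrect : IsRectangular d) {y : ℕ → X}
    (hy : Injective y) {K c : ℝ} (hK : 0 ≤ K) (hc0 : 0 ≤ c) (hc1 : c < 1)
    (h₁ : ∀ n, d (y n) (y (n + 1)) ≤ c ^ n * K) (h₂ : ∀ n, d (y n) (y (n + 2)) ≤ c ^ n * K)
    (k n : ℕ) : d (y n) (y (n + k + 1)) ≤ c ^ n * K / (1 - c) := by
  have hc : 0 < 1 - c := sub_pos.2 hc1
  have hle : ∀ n, c ^ n * K ≤ c ^ n * K / (1 - c) := fun n =>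
    le_div_self (by positivity) hc (by linarith)
  induction k using Nat.strong_induction_on generalizing n with
  | _ k ih =>
    match k with
    | 0 => exact (h₁ n).trans (hle n)
    | 1 => exact (h₂ n).trans (hle n)
    | k + 2 =>
      have hrect' := hrect (y n) (y (n + (k + 2) + 1)) (y (n + 1)) (y (n + 2))
        (hy.ne (by omega)) (hy.ne (by omega)) (hy.ne (by omega)) (hy.ne (by omega))
        (hy.ne (by omega))
      have htail := ih k (by omega) (n + 2)
      rw [show n + 2 + k + 1 = n + (k + 2) + 1 by omega] at htail
      calc d (y n) (y (n + (k + 2) + 1))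
          ≤ c ^ n * K + c ^ (n + 1) * K + c ^ (n + 2) * K / (1 - c) := by
            linarith [h₁ n, h₁ (n + 1)]
        _ = c ^ n * K / (1 - c) := by field_simp; ring

theorem isDCauchy_of_isRectangular_of_geometric (hself : ∀ x, d x x = 0)
    (hsymm : ∀ x y, d x y = d y x) (hrect : IsRectangular d) {y : ℕ → X}
    (hy : Injective y) {K c : ℝ} (hK : 0 ≤ K) (hc0 : 0 ≤ c) (hc1 : c < 1)
    (h₁ : ∀ n, d (y n) (y (n + 1)) ≤ c ^ n * K) (h₂ : ∀ n, d (y n) (y (n + 2)) ≤ c ^ n * K) :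
    IsDCauchy d y := by
  intro ε hε
  have hlim : Tendsto (fun n : ℕ => c ^ n * K / (1 - c)) atTop (𝓝 0) := by
    simpa using ((tendsto_pow_atTop_nhds_zero_of_lt_one hc0 hc1).mul_const K).div_const (1 - c)
  obtain ⟨N, hN⟩ := eventually_atTop.1 (hlim.eventually (gt_mem_nhds hε))
  refine ⟨N, fun m hm n hn => ?_⟩
  wlog hnm : n ≤ m generalizing m n
  · rw [hsymm]; exact this n hn m hm (by omega)
  obtain rfl | hlt := hnm.eq_or_lt
  · rwa [hself]
  rw [hsymm, show m = n + (m - n - 1) + 1 by omega]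
  calc d (y n) (y (n + (m - n - 1) + 1))
      ≤ c ^ n * K / (1 - c) :=
        dist_le_of_isRectangular_of_geometric hrect hy hK hc0 hc1 h₁ h₂ _ n
    _ ≤ c ^ N * K / (1 - c) := by
        gcongr ?_ * K / _
        exact pow_le_pow_of_le_one hc0 hc1.le hn
    _ < ε := hN N le_rfl

theorem eventually_ne_of_injective {y : ℕ → X} (hy : Injective y) (r : X) :
    ∀ᶠ n in atTop, y n ≠ r := by
  simpa [Nat.cofinite_eq_atTop] using hy.tendsto_cofinite.eventually (eventually_cofinite_ne r)

theorem dist_nonpos_of_isRectangular_of_subseq (hsymm : ∀ x y, d x y = d y x)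
    (hrect : IsRectangular d) {y : ℕ → X} (hy : Injective y) {p q : X} {lam : ℝ}
    (hlam : lam < 1) (hstep : ∀ n, d (y (n + 1)) q ≤ lam * (d (y n) (y (n + 1)) + d p q))
    (hgap : Tendsto (fun n => d (y n) (y (n + 1))) atTop (𝓝 0)) {φ : ℕ → ℕ}
    (hφ : StrictMono φ) (hp : Tendsto (fun k => d (y (φ k)) p) atTop (𝓝 0)) :
    d p q ≤ 0 := by
  by_contra! hpos
  have hsmall : Tendsto (fun k => d (y (φ k)) p + (1 + lam) * d (y (φ k)) (y (φ k + 1)))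
      atTop (𝓝 0) := by
    simpa using hp.add ((hgap.comp hφ.tendsto_atTop).const_mul (1 + lam))
  have havoid : ∀ r, ∀ᶠ n in atTop, y n ≠ r ∧ y (n + 1) ≠ r := fun r =>
    (eventually_ne_of_injective hy r).and
      ((tendsto_add_atTop_nat 1).eventually (eventually_ne_of_injective hy r))
  obtain ⟨k, hk, ⟨hp₀, hp₁⟩, hq₀, hq₁⟩ :=
    ((hsmall.eventually (gt_mem_nhds (mul_pos (sub_pos.2 hlam) hpos))).and
      (hφ.tendsto_atTop.eventually ((havoid p).and (havoid q)))).exists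
  have hrect' := hrect p q (y (φ k)) (y (φ k + 1)) (hy.ne (by omega)) hp₀ hq₀ hp₁ hq₁
  rw [hsymm p (y (φ k))] at hrect'
  linarith [hstep (φ k)]

end Rectangular

section Kannan

variable {X : Type*} (d : X → X → ℝ) (T S : X → X) (lam : ℝ)

def IsKannanContraction : Prop :=
  ∀ x y, d (T (S x)) (T (S y)) ≤ lam * (d (T x) (T (S x)) + d (T y) (T (S y)))

variable {d T S lam}

theorem kannan_displacement_le (hlam : lam < 1) (h : IsKannanContraction d T S lam) (x : X) :
    d (T (S x)) (T (S (S x))) ≤ lam / (1 - lam) * d (T x) (T (S x)) := by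
  rw [div_mul_eq_mul_div, le_div_iff₀ (sub_pos.2 hlam)]
  linarith [h x (S x)]

theorem kannan_displacement_iterate_le (hlam0 : 0 ≤ lam) (hlam : lam < 1)
    (h : IsKannanContraction d T S lam) (x : X) (n : ℕ) :
    d (T (S^[n] x)) (T (S^[n + 1] x)) ≤ (lam / (1 - lam)) ^ n * d (T x) (T (S x)) := by
  refine le_geom (u := fun n => d (T (S^[n] x)) (T (S^[n + 1] x)))
    (div_nonneg hlam0 (by linarith)) n fun k _ => ?_
  simpa only [iterate_succ_apply'] using kannan_displacement_le hlam h (S^[k] x)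

theorem kannan_dist_iterate_two_le (hlam0 : 0 ≤ lam) (hlam : lam < 1 / 2)
    (hd_nonneg : ∀ x y, 0 ≤ d x y) (h : IsKannanContraction d T S lam) (x : X) (n : ℕ) :
    d (T (S^[n + 1] x)) (T (S^[n + 3] x)) ≤ (lam / (1 - lam)) ^ n * d (T x) (T (S x)) := by
  set c := lam / (1 - lam)
  have hc0 : 0 ≤ c := div_nonneg hlam0 (by linarith)
  have hc1 : c ≤ 1 := by rw [div_le_one (by linarith)]; linarith
  have hK := hd_nonneg (T x) (T (S x))
  have h₀ := kannan_displacement_iterate_le hlam0 (by linarith) h x n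
  have h₂ := kannan_displacement_iterate_le hlam0 (by linarith) h x (n + 2)
  have hc2 : c ^ (n + 2) ≤ c ^ n := pow_le_pow_of_le_one hc0 hc1 (by omega)
  have hcontr := h (S^[n] x) (S^[n + 2] x)
  simp only [← iterate_succ_apply' S] at hcontr
  calc d (T (S^[n + 1] x)) (T (S^[n + 3] x))
      ≤ lam * (c ^ n * d (T x) (T (S x)) + c ^ (n + 2) * d (T x) (T (S x))) := by
        refine hcontr.trans (mul_le_mul_of_nonneg_left ?_ hlam0)
        exact add_le_add h₀ h₂
    _ ≤ lam * (2 * (c ^ n * d (T x) (T (S x)))) := by gcongr; nlinarith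
    _ ≤ c ^ n * d (T x) (T (S x)) := by nlinarith [mul_nonneg (pow_nonneg hc0 n) hK]

theorem kannan_orbit_injective (hlam : lam < 1 / 2) (hd_nonneg : ∀ x y, 0 ≤ d x y)
    (hd_eq : ∀ x y, d x y = 0 ↔ x = y) (hTi : Injective T)
    (h : IsKannanContraction d T S lam)
    {x : X} (hne : ∀ n, S (S^[n] x) ≠ S^[n] x) : Injective fun n => S^[n] x := by
  have hpos : ∀ n, 0 < d (T (S^[n] x)) (T (S (S^[n] x))) := fun n =>
    (hd_nonneg _ _).lt_of_ne fun h0 => hne n (hTi ((hd_eq _ _).1 h0.symm)).symm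
  have hc1 : lam / (1 - lam) < 1 := by rw [div_lt_one (by linarith)]; linarith
  have hanti : StrictAnti fun n => d (T (S^[n] x)) (T (S (S^[n] x))) :=
    strictAnti_nat_of_succ_lt fun n => by
      simp only [iterate_succ_apply']
      exact (kannan_displacement_le (by linarith) h _).trans_lt
        (mul_lt_of_lt_one_left (hpos n) hc1)
  exact hanti.injective.of_comp (f := fun x => d (T x) (T (S x)))

theorem kannan_fixedPoint_unique (hd_nonneg : ∀ x y, 0 ≤ d x y)
    (hd_eq : ∀ x y, d x y = 0 ↔ x = y) (hTi : Injective T)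
    (h : IsKannanContraction d T S lam)
    {u v : X} (hu : S u = u) (hv : S v = v) : u = v := by
  have huv := h u v
  rw [hu, hv, (hd_eq (T u) _).2 rfl, (hd_eq (T v) _).2 rfl, add_zero, mul_zero] at huv
  exact hTi ((hd_eq _ _).1 (le_antisymm huv (hd_nonneg _ _)))

end Kannan

theorem extended_kannan_generalized_metric
    {X : Type*} [Nonempty X] (d : X → X → ℝ)
    (hd_nonneg : ∀ x y, 0 ≤ d x y)
    (hd_eq : ∀ x y, d x y = 0 ↔ x = y)
    (hd_symm : ∀ x y, d x y = d y x)
    (hd_rect : ∀ x y w z : X, w ≠ z → w ≠ x → w ≠ y → z ≠ x → z ≠ y →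
      d x y ≤ d x w + d w z + d z y)
    (hcomplete : ∀ u : ℕ → X,
      (∀ ε : ℝ, 0 < ε → ∃ N, ∀ m ≥ N, ∀ n ≥ N, d (u m) (u n) < ε) →
      ∃ L : X, Tendsto (fun n => d (u n) L) atTop (𝓝 0))
    (T S : X → X)
    (hTc : ∀ (u : ℕ → X) (L : X), Tendsto (fun n => d (u n) L) atTop (𝓝 0) →
      Tendsto (fun n => d (T (u n)) (T L)) atTop (𝓝 0))
    (hTi : Function.Injective T)
    (hTsub : ∀ u : ℕ → X,
      (∃ L : X, Tendsto (fun n => d (T (u n)) L) atTop (𝓝 0)) →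
      ∃ (z : X) (φ : ℕ → ℕ), StrictMono φ ∧
        Tendsto (fun k => d (u (φ k)) z) atTop (𝓝 0))
    (lam : ℝ) (hlam0 : 0 ≤ lam) (hlam : lam < 1/2)
    (h : ∀ x y : X, d (T (S x)) (T (S y)) ≤
      lam * (d (T x) (T (S x)) + d (T y) (T (S y)))) :
    ∃! u : X, S u = u := by
  suffices ∃ u, S u = u from this.elim fun u hu =>
    ⟨u, hu, fun v hv => kannan_fixedPoint_unique hd_nonneg hd_eq hTi h hv hu⟩
  obtain ⟨x₀⟩ := ‹Nonempty X›
  by_cases hfix : ∃ n, S (S^[n] x₀) = S^[n] x₀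
  · exact hfix.elim fun n hn => ⟨_, hn⟩
  push Not at hfix
  set c := lam / (1 - lam)
  have hc0 : 0 ≤ c := div_nonneg hlam0 (by linarith)
  have hc1 : c < 1 := by rw [div_lt_one (by linarith)]; linarith
  have hK := hd_nonneg (T x₀) (T (S x₀))
  set y := fun n => T (S^[n + 1] x₀)
  have hy : Injective y :=
    hTi.comp ((kannan_orbit_injective hlam hd_nonneg hd_eq hTi h hfix).comp (add_left_injective 1))
  have h₁ : ∀ n, d (y n) (y (n + 1)) ≤ c ^ n * d (T x₀) (T (S x₀)) := fun n =>
    (kannan_displacement_iterate_le hlam0 (by linarith) h x₀ (n + 1)).trans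
      (mul_le_mul_of_nonneg_right (pow_le_pow_of_le_one hc0 hc1.le n.le_succ) hK)
  have h₂ := kannan_dist_iterate_two_le hlam0 hlam hd_nonneg h x₀
  obtain ⟨L, hL⟩ := hcomplete y (isDCauchy_of_isRectangular_of_geometric
    (fun x => (hd_eq x x).2 rfl) hd_symm hd_rect hy hK hc0 hc1 h₁ h₂)
  obtain ⟨z, φ, hφ, hz⟩ := hTsub (fun n => S^[n + 1] x₀) ⟨L, hL⟩
  have hgap : Tendsto (fun n => d (y n) (y (n + 1))) atTop (𝓝 0) :=
    squeeze_zero (fun n => hd_nonneg _ _) h₁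
      (by simpa using (tendsto_pow_atTop_nhds_zero_of_lt_one hc0 hc1).mul_const _)
  have hstep : ∀ n, d (y (n + 1)) (T (S z)) ≤ lam * (d (y n) (y (n + 1)) + d (T z) (T (S z))) :=
    fun n => by simpa only [y, iterate_succ_apply'] using h (S^[n + 1] x₀) z
  have hδ := dist_nonpos_of_isRectangular_of_subseq hd_symm hd_rect hy (by linarith) hstep hgap
    hφ (hTc _ z hz)
  exact ⟨z, (hTi ((hd_eq _ _).1 (le_antisymm hδ (hd_nonneg _ _)))).symm⟩
end

section
/- Let (X,d) be a complete metric space and S : X → X satisfy d(S x, S y) ≤ λ·(d(x, S x) + d(y, S y)) for all x, y ∈ X, where λ ∈ [0, 1/2). Then S has a unique fixed point, and for every x₀ ∈ X the iterates Sⁿ x₀ converge to it. -/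
/-!
Kannan's condition applied to `x` and `S x` gives `(1 - λ) d(S x, S² x) ≤ λ d(x, S x)`, so the
steps of every orbit shrink geometrically with ratio `λ / (1 - λ) < 1` and the orbit is Cauchy.
At its limit `u`, the condition applied to `u` and the orbit gives
`(1 - λ) d(u, S u) ≤ d(u, Sⁿ⁺¹ x) + λ d(Sⁿ x, Sⁿ⁺¹ x) → 0`. Two fixed points `u, v` satisfy
`d(u, v) = d(S u, S v) ≤ λ (0 + 0)`, so all orbits converge to the same point.
-/

open Filter Topology Function

namespace Kannan

variable {X : Type*} [MetricSpace X] {S : X → X} {lam : ℝ}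

lemma dist_map_map_self_le (h : ∀ x y : X, dist (S x) (S y) ≤ lam * (dist x (S x) + dist y (S y)))
    (hlam : lam < 1) (x : X) :
    dist (S x) (S (S x)) ≤ lam / (1 - lam) * dist x (S x) := by
  rw [div_mul_eq_mul_div, le_div_iff₀ (by linarith)]
  linarith [h x (S x)]

lemma dist_iterate_succ_le_geometric
    (h : ∀ x y : X, dist (S x) (S y) ≤ lam * (dist x (S x) + dist y (S y)))
    (hlam0 : 0 ≤ lam) (hlam : lam < 1) (x : X) (n : ℕ) :
    dist (S^[n] x) (S^[n + 1] x) ≤ dist x (S x) * (lam / (1 - lam)) ^ n := by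
  induction n with
  | zero => simp
  | succ n ih =>
    have hr : 0 ≤ lam / (1 - lam) := div_nonneg hlam0 (by linarith)
    calc dist (S^[n + 1] x) (S^[n + 2] x)
        = dist (S (S^[n] x)) (S (S (S^[n] x))) := by
          simp only [iterate_succ_apply']
      _ ≤ lam / (1 - lam) * dist (S^[n] x) (S (S^[n] x)) := dist_map_map_self_le h hlam _
      _ ≤ lam / (1 - lam) * (dist x (S x) * (lam / (1 - lam)) ^ n) := by
          rw [← iterate_succ_apply' S n x]
          exact mul_le_mul_of_nonneg_left ih hr
      _ = dist x (S x) * (lam / (1 - lam)) ^ (n + 1) := by ring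

lemma cauchySeq_iterate (h : ∀ x y : X, dist (S x) (S y) ≤ lam * (dist x (S x) + dist y (S y)))
    (hlam0 : 0 ≤ lam) (hlam : lam < 1 / 2) (x : X) :
    CauchySeq fun n => S^[n] x := by
  refine cauchySeq_of_le_geometric _ _ ?_ (dist_iterate_succ_le_geometric h hlam0 (by linarith) x)
  rw [div_lt_one (by linarith)]
  linarith

lemma isFixedPt_of_tendsto_iterate
    (h : ∀ x y : X, dist (S x) (S y) ≤ lam * (dist x (S x) + dist y (S y)))
    (hlam : lam < 1) {x u : X} (hu : Tendsto (fun n => S^[n] x) atTop (𝓝 u)) :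
    IsFixedPt S u := by
  have hu' : Tendsto (fun n => S^[n + 1] x) atTop (𝓝 u) := hu.comp (tendsto_add_atTop_nat 1)
  have hbound : ∀ n, (1 - lam) * dist (S u) u
      ≤ dist (S^[n + 1] x) u + lam * dist (S^[n] x) (S^[n + 1] x) := by
    intro n
    have hSn : dist (S u) (S^[n + 1] x) ≤ lam * (dist (S u) u + dist (S^[n] x) (S^[n + 1] x)) := by
      simpa only [iterate_succ_apply', dist_comm u (S u)] using h u (S^[n] x)
    linarith [dist_triangle (S u) (S^[n + 1] x) u]
  have hlim : Tendsto (fun n => dist (S^[n + 1] x) u + lam * dist (S^[n] x) (S^[n + 1] x))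
      atTop (𝓝 0) := by
    simpa using (tendsto_iff_dist_tendsto_zero.mp hu').add ((hu.dist hu').const_mul lam)
  have hle : (1 - lam) * dist (S u) u ≤ 0 := ge_of_tendsto' hlim hbound
  exact dist_le_zero.mp (nonpos_of_mul_nonpos_right hle (by linarith))

lemma eq_of_isFixedPt (h : ∀ x y : X, dist (S x) (S y) ≤ lam * (dist x (S x) + dist y (S y)))
    {u v : X} (hu : IsFixedPt S u) (hv : IsFixedPt S v) : u = v := by
  have huv := h u v
  rw [hu, hv, dist_self, dist_self, add_zero, mul_zero] at huv
  exact dist_le_zero.mp huv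

end Kannan

open Kannan

theorem kannan_fixed_point
    {X : Type*} [MetricSpace X] [CompleteSpace X] [Nonempty X]
    (S : X → X)
    (lam : ℝ) (hlam0 : 0 ≤ lam) (hlam : lam < 1/2)
    (h : ∀ x y : X, dist (S x) (S y) ≤ lam * (dist x (S x) + dist y (S y))) :
    ∃ u : X, (∀ v : X, S v = v ↔ v = u) ∧
      ∀ x₀ : X, Tendsto (fun n => S^[n] x₀) atTop (𝓝 u) := by
  have orbit_tendsto_fixedPt : ∀ x₀ : X, ∃ u, IsFixedPt S u ∧
      Tendsto (fun n => S^[n] x₀) atTop (𝓝 u) := fun x₀ => by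
    obtain ⟨u, hu⟩ := cauchySeq_tendsto_of_complete (cauchySeq_iterate h hlam0 hlam x₀)
    exact ⟨u, isFixedPt_of_tendsto_iterate h (by linarith) hu, hu⟩
  obtain ⟨u, hfix, -⟩ := orbit_tendsto_fixedPt (Classical.arbitrary X)
  refine ⟨u, fun v => ⟨fun hv => eq_of_isFixedPt h hv hfix, fun hv => hv ▸ hfix⟩, fun x₀ => ?_⟩
  obtain ⟨u', hfix', hu'⟩ := orbit_tendsto_fixedPt x₀
  rwa [eq_of_isFixedPt h hfix' hfix] at hu'
end
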